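/- arXiv:2312.00956 — 3 statements merged into one kernel-verified Lean document; each statement's English description precedes it below -/
import Mathlib

section
/- For matrices A, B in C^{n×n}, the singular angle satisfies the triangle inequality θ(AB) ≤ θ(A) + θ(B). -/
open scoped Matrix

noncomputable def evnorm {n : ℕ} (x : Fin n → ℂ) : ℝ :=
  Real.sqrt ((star x ⬝ᵥ x).re)

noncomputable def qform {n : ℕ} (A : Matrix (Fin n) (Fin n) ℂ) (x : Fin n → ℂ) : ℂ :=
  star x ⬝ᵥ A.mulVec x

noncomputable def nnr {n : ℕ} (A : Matrix (Fin n) (Fin n) ℂ) : Set ℂ :=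
  {z | ∃ x : Fin n → ℂ, x ≠ 0 ∧ A.mulVec x ≠ 0 ∧
    z = qform A x / ((evnorm x * evnorm (A.mulVec x) : ℝ) : ℂ)}

noncomputable def singAngle {n : ℕ} (A : Matrix (Fin n) (Fin n) ℂ) : ℝ :=
  sSup {θ : ℝ | ∃ x : Fin n → ℂ, x ≠ 0 ∧ A.mulVec x ≠ 0 ∧
    θ = Real.arccos ((qform A x).re / (evnorm x * evnorm (A.mulVec x)))}

noncomputable def revProd {n m : ℕ} (A : Fin m → Matrix (Fin n) (Fin n) ℂ) :
    Matrix (Fin n) (Fin n) ℂ :=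
  (List.ofFn A).reverse.prod


/-!
Read `ℂⁿ` as a real inner product space with `⟪x, y⟫_ℝ = Re (x* y)`. Then the quantity whose
supremum defines `θ(M)` is the Euclidean angle between `x` and `Mx`, and
`∠(x, ABx) ≤ ∠(x, Bx) + ∠(Bx, A(Bx)) ≤ θ(B) + θ(A)` by the triangle inequality for angles.
-/

open InnerProductGeometry

attribute [local instance] InnerProductSpace.rclikeToReal

local notation "ℓ²" => WithLp.toLp 2

section

variable {n : ℕ}

lemma evnorm_eq_norm (x : Fin n → ℂ) : evnorm x = ‖(ℓ² x : EuclideanSpace ℂ (Fin n))‖ := by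
  rw [@norm_eq_sqrt_re_inner ℂ, EuclideanSpace.inner_toLp_toLp, dotProduct_comm]
  rfl

lemma re_star_dotProduct_eq_real_inner (x y : Fin n → ℂ) :
    (star x ⬝ᵥ y).re = inner ℝ (ℓ² x : EuclideanSpace ℂ (Fin n)) (ℓ² y) := by
  rw [real_inner_eq_re_inner, EuclideanSpace.inner_toLp_toLp, dotProduct_comm]
  rfl

lemma arccos_re_star_dotProduct_div_eq_angle (x y : Fin n → ℂ) :
    Real.arccos ((star x ⬝ᵥ y).re / (evnorm x * evnorm y)) =
      angle (ℓ² x : EuclideanSpace ℂ (Fin n)) (ℓ² y) := by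
  rw [angle, re_star_dotProduct_eq_real_inner, evnorm_eq_norm, evnorm_eq_norm]

lemma singAngle_eq_sSup_angle (A : Matrix (Fin n) (Fin n) ℂ) :
    singAngle A = sSup {θ | ∃ x : Fin n → ℂ, x ≠ 0 ∧ A *ᵥ x ≠ 0 ∧
      θ = angle (ℓ² x : EuclideanSpace ℂ (Fin n)) (ℓ² (A *ᵥ x))} := by
  simp only [singAngle, qform, arccos_re_star_dotProduct_div_eq_angle]

lemma angle_le_singAngle (A : Matrix (Fin n) (Fin n) ℂ) {x : Fin n → ℂ} (hx : x ≠ 0)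
    (hAx : A *ᵥ x ≠ 0) :
    angle (ℓ² x : EuclideanSpace ℂ (Fin n)) (ℓ² (A *ᵥ x)) ≤ singAngle A := by
  rw [singAngle_eq_sSup_angle]
  exact le_csSup ⟨Real.pi, by rintro _ ⟨y, -, -, rfl⟩; exact angle_le_pi _ _⟩ ⟨x, hx, hAx, rfl⟩

lemma singAngle_nonneg (A : Matrix (Fin n) (Fin n) ℂ) : 0 ≤ singAngle A := by
  rw [singAngle_eq_sSup_angle]
  exact Real.sSup_nonneg fun _ ⟨_, _, _, hθ⟩ => hθ ▸ angle_nonneg _ _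

end

theorem stmt6 {n : ℕ} (A B : Matrix (Fin n) (Fin n) ℂ) :
    singAngle (A * B) ≤ singAngle A + singAngle B := by
  rw [singAngle_eq_sSup_angle]
  refine Real.sSup_le ?_ (add_nonneg (singAngle_nonneg A) (singAngle_nonneg B))
  rintro _ ⟨x, hx, hABx, rfl⟩
  rw [← Matrix.mulVec_mulVec] at hABx ⊢
  have hBx : B *ᵥ x ≠ 0 := fun h => hABx (by rw [h, Matrix.mulVec_zero])
  have hB := angle_le_singAngle B hx hBx
  have hA := angle_le_singAngle A hBx hABx
  linarith [angle_le_angle_add_angle (ℓ² x : EuclideanSpace ℂ (Fin n)) (ℓ² (B *ᵥ x))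
    (ℓ² (A *ᵥ B *ᵥ x))]
end

section
/- Let A₁, …, A_m ∈ C^{n×n} and suppose there exist γ₁, …, γ_m ∈ [−π, π) such that for each k, θ(e^{−iγ_k} A_k) =: r_k satisfies Σ_{k=1}^m (γ_k + r_k) < π and Σ_{k=1}^m (γ_k − r_k) > −π. Then for every nonzero eigenvalue λ of A_m A_{m−1} ⋯ A₁, there exists a choice of argument φ of λ (i.e., λ = |λ| e^{iφ}) with Σ_{k=1}^m (γ_k − r_k) ≤ φ ≤ Σ_{k=1}^m (γ_k + r_k). -/
open scoped Matrix

/-!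
Let `v` be an eigenvector of `A_m ⋯ A_1` for `λ ≠ 0`, `x_j = A_j ⋯ A_1 v`
and `s_j = γ_1 + ⋯ + γ_j`.
In `ℂⁿ` seen as a real inner product space, the angle between `e^{-i s_{j-1}} x_{j-1}` and
`e^{-i s_j} x_j` is the angle between `x_{j-1}` and `e^{-iγ_j} A_j x_{j-1}`, hence at most `r_j`.
The triangle inequality for angles bounds the angle between `v` and `e^{-i s_m} λ v` by `∑ r_j`,
and that angle is `|arg (e^{-i s_m} λ)|`, so `s_m + arg (e^{-i s_m} λ)` is an argument of `λ`
within `∑ r_j` of `s_m`.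
-/

open InnerProductGeometry Complex

namespace EuclideanSpace

variable {ι : Type*} [Fintype ι]

theorem real_inner_eq_re_inner (x y : EuclideanSpace ℂ ι) :
    inner ℝ x y = (inner ℂ x y).re := by
  simp [PiLp.inner_apply, Complex.re_sum]

theorem angle_smul_smul {c : ℂ} (hc : c ≠ 0) (x y : EuclideanSpace ℂ ι) :
    angle (c • x) (c • y) = angle x y := by
  have hc' : 0 < ‖c‖ := norm_pos_iff.mpr hc
  unfold angle
  simp only [real_inner_eq_re_inner, inner_smul_left, inner_smul_right, ← mul_assoc, mul_conj',
    ← ofReal_pow, re_ofReal_mul, norm_smul]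
  congr 1
  field_simp

theorem angle_self_smul {x : EuclideanSpace ℂ ι} (hx : x ≠ 0) {c : ℂ} (hc : c ≠ 0) :
    angle x (c • x) = |c.arg| := by
  have hx' : 0 < ‖x‖ := norm_pos_iff.mpr hx
  have hc' : 0 < ‖c‖ := norm_pos_iff.mpr hc
  have hinner : inner ℝ x (c • x) = c.re * ‖x‖ ^ 2 := by
    rw [real_inner_eq_re_inner, inner_smul_right, inner_self_eq_norm_sq_to_K]
    norm_cast
    exact re_mul_ofReal _ _
  rw [angle, hinner, norm_smul,
    show c.re * ‖x‖ ^ 2 / (‖x‖ * (‖c‖ * ‖x‖)) = c.re / ‖c‖ by field_simp, ← cos_arg hc,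
    ← Real.cos_abs, Real.arccos_cos (abs_nonneg _) (abs_arg_le_pi c)]

end EuclideanSpace

theorem Complex.exists_eq_norm_mul_exp_of_abs_arg_le (μ : ℂ) {s R : ℝ}
    (h : |arg (exp (-(s : ℂ) * I) * μ)| ≤ R) :
    ∃ φ : ℝ, μ = ‖μ‖ * exp (φ * I) ∧ s - R ≤ φ ∧ φ ≤ s + R := by
  set c := exp (-(s : ℂ) * I) * μ
  have hμ : μ = exp (s * I) * c := by
    rw [← mul_assoc, ← Complex.exp_add, neg_mul, add_neg_cancel, Complex.exp_zero, one_mul]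
  have hnorm : ‖c‖ = ‖μ‖ := by simp [c, norm_exp]
  refine ⟨s + arg c, ?_, by linarith [(abs_le.mp h).1], by linarith [(abs_le.mp h).2]⟩
  conv_lhs => rw [hμ, ← norm_mul_exp_arg_mul_I c, hnorm]
  push_cast
  rw [add_mul, Complex.exp_add]
  ring

theorem Matrix.exists_mulVec_eq_smul_of_mem_spectrum {K ι : Type*} [Field K] [Fintype ι]
    [DecidableEq ι] {A : Matrix ι ι K} {μ : K} (hμ : μ ∈ spectrum K A) :
    ∃ v ≠ 0, A *ᵥ v = μ • v := by
  rw [← Matrix.spectrum_toLin', ← Module.End.hasEigenvalue_iff_mem_spectrum] at hμ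
  obtain ⟨v, hv⟩ := hμ.exists_hasEigenvector
  exact ⟨v, hv.2, hv.apply_eq_smul⟩

section SingularAngle

variable {n : ℕ}

theorem norm_toLp_eq_evnorm (x : Fin n → ℂ) : ‖WithLp.toLp 2 x‖ = evnorm x := by
  rw [norm_eq_sqrt_re_inner (𝕜 := ℂ), EuclideanSpace.inner_toLp_toLp, dotProduct_comm, evnorm]
  rfl

theorem angle_toLp_toLp (x y : Fin n → ℂ) :
    angle (WithLp.toLp 2 x) (WithLp.toLp 2 y) =
      Real.arccos ((star x ⬝ᵥ y).re / (evnorm x * evnorm y)) := by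
  rw [angle, EuclideanSpace.real_inner_eq_re_inner, EuclideanSpace.inner_toLp_toLp,
    dotProduct_comm, norm_toLp_eq_evnorm, norm_toLp_eq_evnorm]

theorem angle_toLp_mulVec_le_singAngle (M : Matrix (Fin n) (Fin n) ℂ) {x : Fin n → ℂ}
    (hx : x ≠ 0) (hMx : M *ᵥ x ≠ 0) :
    angle (WithLp.toLp 2 x) (WithLp.toLp 2 (M *ᵥ x)) ≤ singAngle M := by
  refine le_csSup ⟨Real.pi, ?_⟩ ⟨x, hx, hMx, angle_toLp_toLp x _⟩
  rintro _ ⟨y, -, -, rfl⟩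
  exact Real.arccos_le_pi _

theorem revProd_succ {m : ℕ} (A : Fin (m + 1) → Matrix (Fin n) (Fin n) ℂ) :
    revProd A = revProd (fun k => A k.succ) * A 0 := by
  simp [revProd, List.ofFn_succ]

theorem angle_toLp_smul_revProd_mulVec_le_sum_singAngle {m : ℕ}
    (A : Fin m → Matrix (Fin n) (Fin n) ℂ) (γ : Fin m → ℝ) {v : Fin n → ℂ}
    (hv : revProd A *ᵥ v ≠ 0) :
    angle (WithLp.toLp 2 v)
        (WithLp.toLp 2 (exp (-((∑ k, γ k : ℝ) : ℂ) * I) • revProd A *ᵥ v)) ≤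
      ∑ k, singAngle (exp (-(γ k : ℂ) * I) • A k) := by
  induction m generalizing v with
  | zero =>
    have hv0 : v ≠ 0 := by simpa [revProd] using hv
    simp [revProd, angle_self (WithLp.toLp_injective 2 |>.ne hv0)]
  | succ m ih =>
    rw [revProd_succ, ← Matrix.mulVec_mulVec] at hv ⊢
    set u := A 0 *ᵥ v with hu_def
    have hu : u ≠ 0 := fun h => hv (by rw [h, Matrix.mulVec_zero])
    have hv0 : v ≠ 0 := fun h => hu (by rw [hu_def, h, Matrix.mulVec_zero])
    set e := exp (-(γ 0 : ℂ) * I)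
    set e' := exp (-((∑ k : Fin m, γ k.succ : ℝ) : ℂ) * I)
    have hrot : exp (-((∑ k, γ k : ℝ) : ℂ) * I) = e * e' := by
      rw [Fin.sum_univ_succ, ← Complex.exp_add]
      push_cast
      ring_nf
    have hfirst : angle (WithLp.toLp 2 v) (WithLp.toLp 2 (e • u)) ≤ singAngle (e • A 0) := by
      have := angle_toLp_mulVec_le_singAngle (e • A 0) hv0
        (by rw [Matrix.smul_mulVec]; exact smul_ne_zero (exp_ne_zero _) hu)
      rwa [Matrix.smul_mulVec] at this
    have hrest : angle (WithLp.toLp 2 (e • u))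
        (WithLp.toLp 2 (e • e' • revProd (fun k : Fin m => A k.succ) *ᵥ u)) ≤
          ∑ k : Fin m, singAngle (exp (-(γ k.succ : ℂ) * I) • A k.succ) := by
      rw [WithLp.toLp_smul, WithLp.toLp_smul, EuclideanSpace.angle_smul_smul (exp_ne_zero _)]
      exact ih _ _ hv
    rw [hrot, mul_smul, Fin.sum_univ_succ]
    exact (angle_le_angle_add_angle _ _ _).trans (add_le_add hfirst hrest)

end SingularAngle

theorem stmt9_general {n m : ℕ} (Ak : Fin m → Matrix (Fin n) (Fin n) ℂ) (γ : Fin m → ℝ) :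
    ∀ μ ∈ spectrum ℂ (revProd Ak), μ ≠ 0 →
      ∃ φ : ℝ, μ = (‖μ‖ : ℝ) * Complex.exp (φ * Complex.I) ∧
        (∑ k, (γ k - singAngle (Complex.exp (-(γ k : ℂ) * Complex.I) • Ak k))) ≤ φ ∧
        φ ≤ (∑ k, (γ k + singAngle (Complex.exp (-(γ k : ℂ) * Complex.I) • Ak k))) := by
  intro μ hμ hμ0
  obtain ⟨v, hv, hPv⟩ := Matrix.exists_mulVec_eq_smul_of_mem_spectrum hμ
  have hbound := angle_toLp_smul_revProd_mulVec_le_sum_singAngle Ak γ (v := v)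
    (by simpa [hPv] using ⟨hμ0, hv⟩)
  rw [hPv, smul_smul, WithLp.toLp_smul, EuclideanSpace.angle_self_smul
    (WithLp.toLp_injective 2 |>.ne hv) (mul_ne_zero (exp_ne_zero _) hμ0)] at hbound
  rw [Finset.sum_sub_distrib, Finset.sum_add_distrib]
  exact Complex.exists_eq_norm_mul_exp_of_abs_arg_le μ hbound

theorem stmt9 {n m : ℕ} (Ak : Fin m → Matrix (Fin n) (Fin n) ℂ) (γ : Fin m → ℝ)
    (hγ : ∀ k, γ k ∈ Set.Ico (-Real.pi) Real.pi)
    (h1 : (∑ k, (γ k + singAngle (Complex.exp (-(γ k : ℂ) * Complex.I) • Ak k))) < Real.pi)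
    (h2 : (∑ k, (γ k - singAngle (Complex.exp (-(γ k : ℂ) * Complex.I) • Ak k))) > -Real.pi) :
    ∀ μ ∈ spectrum ℂ (revProd Ak), μ ≠ 0 →
      ∃ φ : ℝ, μ = (‖μ‖ : ℝ) * Complex.exp (φ * Complex.I) ∧
        (∑ k, (γ k - singAngle (Complex.exp (-(γ k : ℂ) * Complex.I) • Ak k))) ≤ φ ∧
        φ ≤ (∑ k, (γ k + singAngle (Complex.exp (-(γ k : ℂ) * Complex.I) • Ak k))) :=
  stmt9_general Ak γ
end

section
/- If A ∈ C^{n×n} is positive definite (Hermitian with all eigenvalues positive), then its singular angle satisfies θ(A) = arccos( 2√κ / (κ + 1) ), where κ = λ_max(A)/λ_min(A) is the condition number of A. -/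
open scoped Matrix

open scoped ComplexOrder

/-!
Diagonalize `A = U D U*` and let `w i = |(U* x) i|²` be the weights of `x` in the eigenbasis. Then
`|x|² = ∑ w i`, `x* A x = ∑ λ i w i` and `|A x|² = ∑ λ i ² w i`, so the cosine of the angle between
`x` and `A x` depends on the weights only. For `m ≤ λ i ≤ M`, summing `(λ i - m) (λ i - M) w i ≤ 0`
gives `∑ λ² w + m M ∑ w ≤ (m + M) ∑ λ w`, and AM-GM turns this into the Kantorovich bound
`cos ≥ 2 √(m M) / (m + M)`. Equality holds for the weight `M` on an eigenvector of `m` and `m` on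
one of `M`, and `2 √(m M) / (m + M) = 2 √κ / (κ + 1)`.
-/

open Matrix

lemma kantorovich {ι : Type*} [Fintype ι] {m M : ℝ} {lam t : ι → ℝ}
    (ht : ∀ i, 0 ≤ t i) (hm : ∀ i, m ≤ lam i) (hM : ∀ i, lam i ≤ M) :
    (∑ i, lam i ^ 2 * t i) * (∑ i, t i) * (4 * m * M) ≤ (m + M) ^ 2 * (∑ i, lam i * t i) ^ 2 := by
  set P := ∑ i, lam i ^ 2 * t i
  set T := ∑ i, t i
  set S := ∑ i, lam i * t i
  have hP : 0 ≤ P := Finset.sum_nonneg fun i _ => mul_nonneg (sq_nonneg _) (ht i)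
  have hT : 0 ≤ T := Finset.sum_nonneg fun i _ => ht i
  have hPT : P + m * M * T ≤ (m + M) * S := by
    simp only [P, T, S, Finset.mul_sum, ← Finset.sum_add_distrib]
    refine Finset.sum_le_sum fun i _ => ?_
    nlinarith [mul_nonneg (mul_nonneg (sub_nonneg.2 (hm i)) (sub_nonneg.2 (hM i))) (ht i)]
  rcases le_or_gt 0 (m * M) with hmM | hmM
  · nlinarith [sq_nonneg (P - m * M * T), mul_nonneg hmM hT]
  · nlinarith [mul_nonneg hP hT, sq_nonneg ((m + M) * S)]

lemma two_sqrt_mul_div_add_le {ι : Type*} [Fintype ι] {m M : ℝ} {lam t : ι → ℝ} (hm₀ : 0 < m)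
    (ht : ∀ i, 0 ≤ t i) (hT : 0 < ∑ i, t i) (hm : ∀ i, m ≤ lam i) (hM : ∀ i, lam i ≤ M) :
    2 * √(m * M) / (m + M) ≤
      (∑ i, lam i * t i) / (√(∑ i, t i) * √(∑ i, lam i ^ 2 * t i)) := by
  obtain ⟨j, -, -⟩ := Finset.exists_ne_zero_of_sum_ne_zero hT.ne'
  have hM₀ : 0 < M := hm₀.trans_le ((hm j).trans (hM j))
  have hP : 0 < ∑ i, lam i ^ 2 * t i := by
    refine lt_of_lt_of_le (mul_pos (pow_pos hm₀ 2) hT) ?_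
    rw [Finset.mul_sum]
    exact Finset.sum_le_sum fun i _ =>
      mul_le_mul_of_nonneg_right (pow_le_pow_left₀ hm₀.le (hm i) 2) (ht i)
  have hS : 0 ≤ ∑ i, lam i * t i :=
    Finset.sum_nonneg fun i _ => mul_nonneg (hm₀.le.trans (hm i)) (ht i)
  rw [div_le_div_iff₀ (by positivity) (by positivity),
    ← pow_le_pow_iff_left₀ (by positivity) (by positivity) two_ne_zero]
  calc (2 * √(m * M) * (√(∑ i, t i) * √(∑ i, lam i ^ 2 * t i))) ^ 2
      = (∑ i, lam i ^ 2 * t i) * (∑ i, t i) * (4 * m * M) := by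
        rw [mul_pow, mul_pow, mul_pow, Real.sq_sqrt (by positivity), Real.sq_sqrt hT.le,
          Real.sq_sqrt hP.le]
        ring
    _ ≤ (m + M) ^ 2 * (∑ i, lam i * t i) ^ 2 := kantorovich ht hm hM
    _ = _ := by ring

-- `a = b` is allowed: then `m = M` and the two weights simply add up.
lemma two_sqrt_mul_div_add_eq_pi_single {ι : Type*} [Fintype ι] [DecidableEq ι] {m M : ℝ}
    {lam : ι → ℝ} (hm₀ : 0 < m) (hM₀ : 0 < M) {a b : ι} (ha : lam a = m) (hb : lam b = M) :
    2 * √(m * M) / (m + M) =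
      (∑ i, lam i * (Pi.single a M + Pi.single b m : ι → ℝ) i) /
        (√(∑ i, (Pi.single a M + Pi.single b m : ι → ℝ) i) *
          √(∑ i, lam i ^ 2 * (Pi.single a M + Pi.single b m : ι → ℝ) i)) := by
  simp only [Pi.add_apply, mul_add, Finset.sum_add_distrib, Pi.single_apply, mul_ite, mul_zero,
    Finset.sum_ite_eq', Finset.mem_univ, if_true, ha, hb]
  have hs : √(m * M) ^ 2 = m * M := Real.sq_sqrt (by positivity)
  have hr : √(m + M) ^ 2 = m + M := Real.sq_sqrt (by positivity)
  rw [show m ^ 2 * M + M ^ 2 * m = m * M * (m + M) by ring,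
    Real.sqrt_mul (mul_pos hm₀ hM₀).le (m + M), add_comm M m,
    div_eq_div_iff (by positivity) (by positivity)]
  linear_combination (2 * √(m + M) ^ 2) * hs + (2 * m * M) * hr

lemma two_sqrt_div_div_add_one {m M : ℝ} (hm : 0 < m) (hM : 0 ≤ M) :
    2 * √(M / m) / (M / m + 1) = 2 * √(m * M) / (m + M) := by
  rw [show M / m = m * M / m ^ 2 by field_simp, Real.sqrt_div' _ (sq_nonneg m),
    Real.sqrt_sq hm.le]
  field_simp
  ring

lemma re_star_dotProduct_self {ι : Type*} [Fintype ι] (x : ι → ℂ) :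
    (star x ⬝ᵥ x).re = ∑ i, Complex.normSq (x i) := by
  simp [dotProduct, Complex.re_sum, Complex.normSq_apply]

lemma re_star_dotProduct_ofReal_mul {ι : Type*} [Fintype ι] (c : ι → ℝ) (x : ι → ℂ) :
    (star x ⬝ᵥ fun i => (c i : ℂ) * x i).re = ∑ i, c i * Complex.normSq (x i) := by
  simp only [dotProduct, Complex.re_sum]
  refine Finset.sum_congr rfl fun i _ => ?_
  simp only [Pi.star_apply, RCLike.star_def, Complex.mul_re, Complex.mul_im, Complex.conj_re,
    Complex.conj_im, Complex.ofReal_re, Complex.ofReal_im, Complex.normSq_apply]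
  ring

lemma re_star_dotProduct_self_pos_iff {ι : Type*} [Fintype ι] {x : ι → ℂ} :
    0 < (star x ⬝ᵥ x).re ↔ x ≠ 0 := by
  rw [← dotProduct_star_self_pos_iff, Complex.pos_iff,
    and_iff_left (Complex.nonneg_iff.1 (dotProduct_star_self_nonneg x)).2]

lemma star_mulVec_dotProduct_mulVec_of_mem_unitaryGroup {ι R : Type*} [Fintype ι] [DecidableEq ι]
    [CommRing R] [StarRing R] {U : Matrix ι ι R} (hU : U ∈ unitaryGroup ι R) (y z : ι → R) :
    star (U *ᵥ y) ⬝ᵥ (U *ᵥ z) = star y ⬝ᵥ z := by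
  rw [star_mulVec, ← dotProduct_mulVec, mulVec_mulVec, ← star_eq_conjTranspose,
    mem_unitaryGroup_iff'.mp hU, one_mulVec]

namespace Matrix.IsHermitian

variable {ι : Type*} [Fintype ι] [DecidableEq ι] {A : Matrix ι ι ℂ} (hA : A.IsHermitian)

noncomputable def spectralWeights (x : ι → ℂ) (i : ι) : ℝ :=
  Complex.normSq ((star (hA.eigenvectorUnitary : Matrix ι ι ℂ) *ᵥ x) i)

lemma mulVec_eigenvectorUnitary_mulVec (y : ι → ℂ) :
    A *ᵥ (hA.eigenvectorUnitary *ᵥ y) =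
      hA.eigenvectorUnitary *ᵥ fun i => (hA.eigenvalues i : ℂ) * y i := by
  have hU := hA.eigenvectorUnitary.2
  have hA' := hA.spectral_theorem
  rw [Unitary.conjStarAlgAut_apply] at hA'
  set U : Matrix ι ι ℂ := (hA.eigenvectorUnitary : Matrix ι ι ℂ)
  nth_rw 1 [hA']
  rw [mulVec_mulVec, Matrix.mul_assoc _ (star U),
    Unitary.star_mul_self_of_mem hU, Matrix.mul_one, ← mulVec_mulVec]
  congr 1
  ext i
  simp [mulVec_diagonal]

lemma exists_eq_eigenvectorUnitary_mulVec (x : ι → ℂ) :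
    ∃ y, x = hA.eigenvectorUnitary *ᵥ y ∧ ∀ i, hA.spectralWeights x i = Complex.normSq (y i) :=
  ⟨star (hA.eigenvectorUnitary : Matrix ι ι ℂ) *ᵥ x,
    by rw [mulVec_mulVec, Unitary.mul_star_self_of_mem hA.eigenvectorUnitary.2, one_mulVec],
    fun _ => rfl⟩

lemma sum_spectralWeights (x : ι → ℂ) :
    ∑ i, hA.spectralWeights x i = (star x ⬝ᵥ x).re := by
  obtain ⟨y, rfl, hw⟩ := hA.exists_eq_eigenvectorUnitary_mulVec x
  rw [star_mulVec_dotProduct_mulVec_of_mem_unitaryGroup hA.eigenvectorUnitary.2,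
    re_star_dotProduct_self]
  exact Finset.sum_congr rfl fun i _ => hw i

lemma sum_eigenvalues_mul_spectralWeights (x : ι → ℂ) :
    ∑ i, hA.eigenvalues i * hA.spectralWeights x i = (star x ⬝ᵥ (A *ᵥ x)).re := by
  obtain ⟨y, rfl, hw⟩ := hA.exists_eq_eigenvectorUnitary_mulVec x
  rw [mulVec_eigenvectorUnitary_mulVec,
    star_mulVec_dotProduct_mulVec_of_mem_unitaryGroup hA.eigenvectorUnitary.2,
    re_star_dotProduct_ofReal_mul]
  exact Finset.sum_congr rfl fun i _ => by rw [hw]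

lemma sum_eigenvalues_sq_mul_spectralWeights (x : ι → ℂ) :
    ∑ i, hA.eigenvalues i ^ 2 * hA.spectralWeights x i = (star (A *ᵥ x) ⬝ᵥ (A *ᵥ x)).re := by
  obtain ⟨y, rfl, hw⟩ := hA.exists_eq_eigenvectorUnitary_mulVec x
  rw [mulVec_eigenvectorUnitary_mulVec,
    star_mulVec_dotProduct_mulVec_of_mem_unitaryGroup hA.eigenvectorUnitary.2,
    re_star_dotProduct_self]
  refine Finset.sum_congr rfl fun i _ => ?_
  rw [hw, Complex.normSq_mul, Complex.normSq_ofReal, sq]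

lemma exists_spectralWeights_eq {t : ι → ℝ} (ht : 0 ≤ t) :
    ∃ x, hA.spectralWeights x = t := by
  refine ⟨hA.eigenvectorUnitary *ᵥ fun i => (√(t i) : ℂ), funext fun i => ?_⟩
  rw [spectralWeights, mulVec_mulVec, Unitary.star_mul_self_of_mem hA.eigenvectorUnitary.2,
    one_mulVec, Complex.normSq_ofReal, Real.mul_self_sqrt (ht i)]

end Matrix.IsHermitian

lemma re_qform_div_evnorm_mul_evnorm {n : ℕ} {A : Matrix (Fin n) (Fin n) ℂ}
    (hA : A.IsHermitian) (x : Fin n → ℂ) :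
    (qform A x).re / (evnorm x * evnorm (A *ᵥ x)) =
      (∑ i, hA.eigenvalues i * hA.spectralWeights x i) /
        (√(∑ i, hA.spectralWeights x i) *
          √(∑ i, hA.eigenvalues i ^ 2 * hA.spectralWeights x i)) := by
  rw [qform, evnorm, evnorm, hA.sum_spectralWeights, hA.sum_eigenvalues_mul_spectralWeights,
    hA.sum_eigenvalues_sq_mul_spectralWeights]

theorem stmt11 {n : ℕ} (hn : 0 < n) (A : Matrix (Fin n) (Fin n) ℂ) (hA : A.PosDef) :
    singAngle A =
      Real.arccos (2 * Real.sqrt ((⨆ i, hA.1.eigenvalues i) / (⨅ i, hA.1.eigenvalues i)) /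
        ((⨆ i, hA.1.eigenvalues i) / (⨅ i, hA.1.eigenvalues i) + 1)) := by
  have : Nonempty (Fin n) := ⟨⟨0, hn⟩⟩
  set lam := hA.1.eigenvalues
  obtain ⟨a, ha⟩ := exists_eq_ciInf_of_finite (f := lam)
  obtain ⟨b, hb⟩ := exists_eq_ciSup_of_finite (f := lam)
  have hlo (i) : lam a ≤ lam i := ha ▸ ciInf_le (Finite.bddBelow_range lam) i
  have hhi (i) : lam i ≤ lam b := hb ▸ le_ciSup (Finite.bddAbove_range lam) i
  have hm := hA.eigenvalues_pos a
  have hM := hA.eigenvalues_pos b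
  rw [← ha, ← hb, two_sqrt_div_div_add_one hm hM.le]
  refine IsGreatest.csSup_eq ⟨?_, ?_⟩
  · have ht : 0 ≤ (Pi.single a (lam b) + Pi.single b (lam a) : Fin n → ℝ) :=
      add_nonneg (Pi.single_nonneg.2 hM.le) (Pi.single_nonneg.2 hm.le)
    obtain ⟨x, hx⟩ := hA.1.exists_spectralWeights_eq ht
    have hx0 : x ≠ 0 := by
      rw [← re_star_dotProduct_self_pos_iff, ← hA.1.sum_spectralWeights, hx]
      simpa [Finset.sum_add_distrib] using add_pos hM hm
    refine ⟨x, hx0, fun h => (hA.re_dotProduct_pos hx0).ne' (by simp [h]), ?_⟩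
    rw [re_qform_div_evnorm_mul_evnorm hA.1, hx, two_sqrt_mul_div_add_eq_pi_single hm hM rfl rfl]
  · rintro _ ⟨x, hx, -, rfl⟩
    refine Real.arccos_le_arccos ?_
    rw [re_qform_div_evnorm_mul_evnorm hA.1]
    refine two_sqrt_mul_div_add_le hm (fun i => Complex.normSq_nonneg _) ?_ hlo hhi
    rwa [hA.1.sum_spectralWeights, re_star_dotProduct_self_pos_iff]
end
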